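/- arXiv:1805.08864 — 2 statements merged into one kernel-verified Lean document; each statement's English description precedes it below -/
import Mathlib

section
/- Let B be an invertible real 2×2 matrix, a ∈ ℝ², F(x̂) = B x̂ + a, and J := det B. Let Û ⊆ ℝ² be open. Let Ξ̂ : Û → ℝ^{2×2} be continuously differentiable with Piola–Kirchhoff transform Ξ (Ξ(F(x̂)) := |J|⁻¹ B Ξ̂(x̂) Bᵀ), let τ̂ : Û → ℝ² have Piola transform τ (τ(F(x̂)) := |J|⁻¹ B τ̂(x̂)), let û : Û → ℝ be differentiable, and set u := û ∘ F⁻¹. Then for every x̂ ∈ Û, |J| · ∇u(F(x̂)) · ((Div Ξ)(F(x̂)) − τ(F(x̂))) = ∇û(x̂) · ((Div Ξ̂)(x̂) − τ̂(x̂)). -/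
open Matrix
/-- The `i`-th partial derivative of a scalar field on `ℝ²`. -/
noncomputable def pd (i : Fin 2) (f : (Fin 2 → ℝ) → ℝ) (x : Fin 2 → ℝ) : ℝ :=
  fderiv ℝ f x (Pi.single i 1)

/-- The gradient `∇f = (∂₁f, ∂₂f)` of a scalar field on `ℝ²`. -/
noncomputable def gradF (f : (Fin 2 → ℝ) → ℝ) (x : Fin 2 → ℝ) : Fin 2 → ℝ :=
  fun i => pd i f x

/-- The row-wise divergence `(Div N)_i = Σ_j ∂_j N_{ij}` of a matrix field. -/
noncomputable def DivMat (N : (Fin 2 → ℝ) → Matrix (Fin 2) (Fin 2) ℝ)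
    (x : Fin 2 → ℝ) : Fin 2 → ℝ :=
  fun i => ∑ j : Fin 2, pd j (fun y => N y i j) x

/-! Under `x̂ ↦ B x̂ + a`, gradients pull back as `∇u ∘ F = ∇û ᵥ* B⁻¹` (chain rule through `F⁻¹`),
while the Piola–Kirchhoff factor `B (·) Bᵀ` makes the divergence transform like a Piola
transform: `Div Ξ ∘ F = |J|⁻¹ B Div Ξ̂`, because the `Bᵀ` on the right cancels the `B⁻¹`
coming from the chain rule. Hence `Div Ξ - τ = |J|⁻¹ B (Div Ξ̂ - τ̂)` at `F x̂`, and pairing with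
`∇û ᵥ* B⁻¹` cancels `B` as well. -/

open Filter Topology

theorem HasFDerivAt.of_comp_affine {𝕜 E F G : Type*} [NontriviallyNormedField 𝕜]
    [NormedAddCommGroup E] [NormedSpace 𝕜 E] [NormedAddCommGroup F] [NormedSpace 𝕜 F]
    [NormedAddCommGroup G] [NormedSpace 𝕜 G] (A : E ≃L[𝕜] F) (a : F) {f : E → G} {g : F → G}
    {D : E →L[𝕜] G} {x : E} (hf : HasFDerivAt f D x) (hgf : (fun y => g (A y + a)) =ᶠ[𝓝 x] f) :
    HasFDerivAt g (D.comp (A.symm : F →L[𝕜] E)) (A x + a) := by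
  have hinv : HasFDerivAt (fun y => A.symm (y - a)) (A.symm : F →L[𝕜] E) (A x + a) :=
    A.symm.hasFDerivAt.comp _ ((hasFDerivAt_id _).sub_const a)
  have hgF : HasFDerivAt (fun y => g (A y + a)) D (A.symm (A x + a - a)) := by
    simpa using hf.congr_of_eventuallyEq hgf
  simpa [Function.comp_def] using hgF.comp (A x + a) hinv

theorem vecMul_inv_vecMul {n R : Type*} [Fintype n] [DecidableEq n] [CommRing R]
    {B : Matrix n n R} (hB : IsUnit B.det) (v : n → R) : v ᵥ* B⁻¹ ᵥ* B = v := by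
  rw [vecMul_vecMul, nonsing_inv_mul _ hB, vecMul_one]

theorem smul_mul_mul_transpose_apply {n R : Type*} [Fintype n] [CommRing R] (c : R)
    (B N : Matrix n n R) (i j : n) :
    (c • (B * N * Bᵀ)) i j = ∑ pq : n × n, c * B i pq.1 * B j pq.2 * N pq.1 pq.2 := by
  simp only [Matrix.smul_apply, mul_apply, transpose_apply, smul_eq_mul, Fintype.sum_prod_type,
    Finset.mul_sum, Finset.sum_mul]
  rw [Finset.sum_comm]
  exact Finset.sum_congr rfl fun p _ => Finset.sum_congr rfl fun q _ => by ring

theorem fderiv_apply_eq_gradF_dotProduct (f : (Fin 2 → ℝ) → ℝ) (x v : Fin 2 → ℝ) :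
    fderiv ℝ f x v = gradF f x ⬝ᵥ v := by
  conv_lhs => rw [pi_eq_sum_univ' v]
  simp only [map_sum, map_smul, smul_eq_mul, dotProduct, gradF, pd, mul_comm]

theorem gradF_sum_mul {ι : Type*} (s : Finset ι) (c : ι → ℝ) {f : ι → (Fin 2 → ℝ) → ℝ}
    {x : Fin 2 → ℝ} (hf : ∀ l ∈ s, DifferentiableAt ℝ (f l) x) :
    gradF (fun y => ∑ l ∈ s, c l * f l y) x = ∑ l ∈ s, c l • gradF (f l) x := by
  funext k
  simp only [gradF, pd, fderiv_fun_sum fun l hl => (hf l hl).const_mul (c l),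
    _root_.sum_apply, Finset.sum_apply, Pi.smul_apply]
  exact Finset.sum_congr rfl fun l hl => by rw [fderiv_const_mul (hf l hl)]; rfl

theorem gradF_of_comp_affine {B : Matrix (Fin 2) (Fin 2) ℝ} (hB : IsUnit B.det) (a : Fin 2 → ℝ)
    {f g : (Fin 2 → ℝ) → ℝ} {x : Fin 2 → ℝ} (hf : DifferentiableAt ℝ f x)
    (hgf : (fun y => g (B *ᵥ y + a)) =ᶠ[𝓝 x] f) :
    gradF g (B *ᵥ x + a) = gradF f x ᵥ* B⁻¹ := by
  let A := (B.toLinearEquiv (Pi.basisFun ℝ (Fin 2)) hB).toContinuousLinearEquiv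
  have hA : ∀ y, A y = B *ᵥ y := fun y => by simp [A, Matrix.toLin_eq_toLin']
  have hAsymm : ∀ y, A.symm y = B⁻¹ *ᵥ y := fun y =>
    A.symm_apply_eq.mpr (by rw [hA, mulVec_mulVec, mul_nonsing_inv _ hB, one_mulVec])
  have hg := hf.hasFDerivAt.of_comp_affine A a (by simpa only [hA] using hgf)
  rw [hA] at hg
  funext j
  rw [gradF, pd, hg.fderiv, ContinuousLinearMap.comp_apply, ContinuousLinearEquiv.coe_coe,
    hAsymm, fderiv_apply_eq_gradF_dotProduct, dotProduct_mulVec, dotProduct_single_one]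

theorem divMat_of_piolaKirchhoff {B : Matrix (Fin 2) (Fin 2) ℝ} (hB : IsUnit B.det)
    (a : Fin 2 → ℝ) (c : ℝ) {N M : (Fin 2 → ℝ) → Matrix (Fin 2) (Fin 2) ℝ} {x : Fin 2 → ℝ}
    (hN : ∀ p q, DifferentiableAt ℝ (fun y => N y p q) x)
    (hMN : ∀ᶠ y in 𝓝 x, M (B *ᵥ y + a) = c • (B * N y * Bᵀ)) :
    DivMat M (B *ᵥ x + a) = c • B *ᵥ DivMat N x := by
  set g : Fin 2 → Fin 2 → Fin 2 → ℝ := fun p q => gradF (fun y => N y p q) x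
  have hpd : ∀ i j, pd j (fun y => M y i j) (B *ᵥ x + a)
      = ∑ p, ∑ q, c * B i p * B j q * (g p q ᵥ* B⁻¹) j := by
    intro i j
    have hev : (fun y => M (B *ᵥ y + a) i j) =ᶠ[𝓝 x]
        fun y => ∑ pq : Fin 2 × Fin 2, c * B i pq.1 * B j pq.2 * N y pq.1 pq.2 := by
      filter_upwards [hMN] with y hy
      rw [hy, smul_mul_mul_transpose_apply]
    have h := gradF_of_comp_affine hB a (g := fun y => M y i j)
      (DifferentiableAt.fun_sum fun (pq : Fin 2 × Fin 2) _ => (hN pq.1 pq.2).const_mul _) hev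
    rw [gradF_sum_mul _ _ fun pq _ => hN pq.1 pq.2, sum_vecMul] at h
    rw [← Fintype.sum_prod_type']
    have hj := congrFun h j
    simp only [smul_vecMul, Finset.sum_apply, Pi.smul_apply, smul_eq_mul] at hj
    exact hj
  funext i
  calc DivMat M (B *ᵥ x + a) i
      = ∑ j, ∑ p, ∑ q, c * B i p * B j q * (g p q ᵥ* B⁻¹) j :=
        Finset.sum_congr rfl fun j _ => hpd i j
    _ = ∑ p, ∑ q, c * B i p * ∑ j, (g p q ᵥ* B⁻¹) j * B j q := by
      simp only [Finset.mul_sum]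
      rw [Finset.sum_comm]
      refine Finset.sum_congr rfl fun p _ => ?_
      rw [Finset.sum_comm]
      exact Finset.sum_congr rfl fun q _ => Finset.sum_congr rfl fun j _ => by ring
    _ = ∑ p, ∑ q, c * B i p * g p q q :=
      Finset.sum_congr rfl fun p _ => Finset.sum_congr rfl fun q _ => by
        rw [← congrFun (vecMul_inv_vecMul hB (g p q)) q]; rfl
    _ = (c • B *ᵥ DivMat N x) i := by
      simp only [Pi.smul_apply, mulVec, dotProduct, DivMat, smul_eq_mul, Finset.mul_sum]
      exact Finset.sum_congr rfl fun p _ => Finset.sum_congr rfl fun q _ => mul_assoc _ _ _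

/-- For the Piola–Kirchhoff transform `Ξ` of `Ξ̂`, the Piola transform `τ`
of `τ̂` and `u = û ∘ F⁻¹`, one has
`|J| ∇u(F x̂) · ((Div Ξ)(F x̂) − τ(F x̂)) = ∇û(x̂) · ((Div Ξ̂)(x̂) − τ̂(x̂))`
(Lemma 9, second transformation relation, smooth case).
Here `Xihat` plays the role of `Ξ̂`, `tauhat` of `τ̂`, `uhat` of `û`, `Uhat` of `Û`,
`xhat` of `x̂`. -/
theorem stmt9
    (B : Matrix (Fin 2) (Fin 2) ℝ) (hB : IsUnit B.det) (a : Fin 2 → ℝ)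
    (F : (Fin 2 → ℝ) → (Fin 2 → ℝ)) (hF : ∀ xhat, F xhat = B.mulVec xhat + a)
    (Uhat : Set (Fin 2 → ℝ)) (hUhat : IsOpen Uhat)
    (Xihat Ξ : (Fin 2 → ℝ) → Matrix (Fin 2) (Fin 2) ℝ)
    (hsmooth : ∀ i j : Fin 2, ContDiffOn ℝ 1 (fun x => Xihat x i j) Uhat)
    (hXi : ∀ xhat ∈ Uhat, Ξ (F xhat) = |B.det|⁻¹ • (B * Xihat xhat * B.transpose))
    (tauhat τ : (Fin 2 → ℝ) → (Fin 2 → ℝ))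
    (htau : ∀ xhat ∈ Uhat, τ (F xhat) = |B.det|⁻¹ • B.mulVec (tauhat xhat))
    (uhat u : (Fin 2 → ℝ) → ℝ)
    (huhat : DifferentiableOn ℝ uhat Uhat)
    (hu : ∀ xhat ∈ Uhat, u (F xhat) = uhat xhat) :
    ∀ xhat ∈ Uhat,
      |B.det| * (gradF u (F xhat) ⬝ᵥ (DivMat Ξ (F xhat) - τ (F xhat)))
        = gradF uhat xhat ⬝ᵥ (DivMat Xihat xhat - tauhat xhat) := by
  obtain rfl : F = fun x => B *ᵥ x + a := funext hF
  intro xhat hx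
  have hnhds : Uhat ∈ 𝓝 xhat := hUhat.mem_nhds hx
  have hgrad : gradF u (B *ᵥ xhat + a) = gradF uhat xhat ᵥ* B⁻¹ :=
    gradF_of_comp_affine hB a (huhat.differentiableAt hnhds) (eventually_of_mem hnhds hu)
  have hdiv : DivMat Ξ (B *ᵥ xhat + a) = |B.det|⁻¹ • B *ᵥ DivMat Xihat xhat :=
    divMat_of_piolaKirchhoff hB a _
      (fun p q => ((hsmooth p q).differentiableOn one_ne_zero).differentiableAt hnhds)
      (eventually_of_mem hnhds hXi)
  have hdet : |B.det| ≠ 0 := abs_ne_zero.mpr hB.ne_zero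
  rw [hgrad, hdiv, htau xhat hx, ← smul_sub, ← mulVec_sub, dotProduct_smul, smul_eq_mul,
    mul_inv_cancel_left₀ hdet, dotProduct_mulVec, vecMul_inv_vecMul hB]
end

section
/- Let B be an invertible real 2×2 matrix, a ∈ ℝ², F(x̂) = B x̂ + a, and J := det B. Let Û ⊆ ℝ² be open, let M̂ : Û → ℝ^{2×2} and ẑ : Û → ℝ be twice continuously differentiable, and let M (Piola–Kirchhoff transform, M(F(x̂)) := |J|⁻¹ B M̂(x̂) Bᵀ) and z := ẑ ∘ F⁻¹ be their transforms on F(Û). Let T̂ ⊆ Û be a compact measurable set and T := F(T̂). Then ∫_T [ (div Div M)(x) · z(x) − M(x) : ∇∇z(x) ] dx = ∫_{T̂} [ (div Div M̂)(x̂) · ẑ(x̂) − M̂(x̂) : ∇∇ẑ(x̂) ] dx̂, where the integrals are with respect to two-dimensional Lebesgue measure. -/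
open MeasureTheory

/-- The twice iterated divergence `div Div N = Σ_{i,j} ∂_i ∂_j N_{ij}` of a matrix field. -/
noncomputable def divDiv (N : (Fin 2 → ℝ) → Matrix (Fin 2) (Fin 2) ℝ) (x : Fin 2 → ℝ) : ℝ :=
  ∑ i : Fin 2, ∑ j : Fin 2, pd i (pd j (fun y => N y i j)) x

/-- The Hessian `∇∇z = (∂_i ∂_j z)_{ij}` of a scalar field. -/
noncomputable def hessian (f : (Fin 2 → ℝ) → ℝ) (x : Fin 2 → ℝ) :
    Matrix (Fin 2) (Fin 2) ℝ :=
  Matrix.of fun i j => pd i (pd j f) x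

/-- Frobenius inner product `A : C = Σ_{i,j} A_{ij} C_{ij}` of 2×2 matrices. -/
def frob (A C : Matrix (Fin 2) (Fin 2) ℝ) : ℝ :=
  ∑ i : Fin 2, ∑ j : Fin 2, A i j * C i j

/-! The two integrands agree pointwise up to the factor `|J|`, which the change of variables
`x = F x̂` absorbs. Differentiating `z = ẑ ∘ F⁻¹` twice gives `∇∇z ∘ F = B⁻ᵀ (∇∇ẑ) B⁻¹`, and the
same two factors `B⁻¹` produced by differentiating `M` twice cancel the Piola factors
`B (·) Bᵀ`, so that `(div Div M) ∘ F = |J|⁻¹ div Div M̂`; for the same reason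
`M : ∇∇z = |J|⁻¹ M̂ : ∇∇ẑ` at corresponding points. -/

open Filter Topology Matrix

section PartialDerivatives

variable {f g : (Fin 2 → ℝ) → ℝ} {x : Fin 2 → ℝ}

lemma fderiv_apply_eq_sum_pd (v : Fin 2 → ℝ) :
    fderiv ℝ f x v = ∑ j, v j * pd j f x := by
  conv_lhs => rw [pi_eq_sum_univ' v]
  simp [pd]

lemma pd_congr (n : Fin 2) (h : f =ᶠ[𝓝 x] g) : pd n f x = pd n g x := by
  rw [pd, pd, h.fderiv_eq]

lemma hessian_congr (h : f =ᶠ[𝓝 x] g) : hessian f x = hessian g x := by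
  ext i j
  exact pd_congr i (h.eventuallyEq_nhds.mono fun y hy => pd_congr j hy)

lemma pd_const_mul (c : ℝ) (n : Fin 2) :
    pd n (fun y => c * f y) = fun y => c * pd n f y := by
  ext y
  change fderiv ℝ (c • f) y _ = _
  rw [fderiv_const_smul_field]
  rfl

lemma hessian_const_mul (c : ℝ) :
    hessian (fun y => c * f y) x = c • hessian f x := by
  ext i j
  simp [hessian, pd_const_mul]

lemma pd_sum {ι : Type*} (s : Finset ι) {f : ι → (Fin 2 → ℝ) → ℝ}
    (hf : ∀ i ∈ s, DifferentiableAt ℝ (f i) x) (n : Fin 2) :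
    pd n (fun y => ∑ i ∈ s, f i y) x = ∑ i ∈ s, pd n (f i) x := by
  simp [pd, fderiv_fun_sum hf]

lemma ContDiffAt.differentiableAt_pd (hf : ContDiffAt ℝ 2 f x) (n : Fin 2) :
    DifferentiableAt ℝ (pd n f) x :=
  ((hf.fderiv_right (m := 1) le_rfl).clm_apply contDiffAt_const).differentiableAt one_ne_zero

lemma hessian_sum {ι : Type*} (s : Finset ι) {f : ι → (Fin 2 → ℝ) → ℝ}
    (hf : ∀ i ∈ s, ContDiffAt ℝ 2 (f i) x) :
    hessian (fun y => ∑ i ∈ s, f i y) x = ∑ i ∈ s, hessian (f i) x := by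
  ext n m
  have hdiff : ∀ᶠ y in 𝓝 x, ∀ i ∈ s, DifferentiableAt ℝ (f i) y :=
    (eventually_all_finset s).2 fun i hi =>
      ((hf i hi).eventually (by simp)).mono fun y hy => hy.differentiableAt (by simp)
  have hpd : pd m (fun y => ∑ i ∈ s, f i y) =ᶠ[𝓝 x] fun y => ∑ i ∈ s, pd m (f i) y := by
    filter_upwards [hdiff] with y hy using pd_sum s hy m
  rw [hessian, of_apply, pd_congr n hpd, pd_sum s fun i hi => (hf i hi).differentiableAt_pd m]
  simp [hessian, Matrix.sum_apply]

end PartialDerivatives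

lemma hasFDerivAt_mulVec_add {ι : Type*} [Fintype ι] [DecidableEq ι] (A : Matrix ι ι ℝ)
    (b y : ι → ℝ) :
    HasFDerivAt (fun y => A *ᵥ y + b) (LinearMap.toContinuousLinearMap (toLin' A)) y :=
  (LinearMap.toContinuousLinearMap (toLin' A)).hasFDerivAt.add_const b

section AffineChangeOfVariables

variable {g G : (Fin 2 → ℝ) → ℝ} {x : Fin 2 → ℝ}

lemma pd_comp_affine (A : Matrix (Fin 2) (Fin 2) ℝ) (b : Fin 2 → ℝ)
    (hg : DifferentiableAt ℝ g (A *ᵥ x + b)) (m : Fin 2) :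
    pd m (fun y => g (A *ᵥ y + b)) x = ∑ j, A j m * pd j g (A *ᵥ x + b) := by
  change fderiv ℝ (g ∘ fun y => A *ᵥ y + b) x _ = _
  rw [(hg.hasFDerivAt.comp x (hasFDerivAt_mulVec_add A b x)).fderiv]
  simp [toLin'_apply, fderiv_apply_eq_sum_pd]

lemma hessian_comp_affine (A : Matrix (Fin 2) (Fin 2) ℝ) (b : Fin 2 → ℝ)
    (hg : ContDiffAt ℝ 2 g (A *ᵥ x + b)) :
    hessian (fun y => g (A *ᵥ y + b)) x = Aᵀ * hessian g (A *ᵥ x + b) * A := by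
  ext n m
  have hdiff : ∀ᶠ y in 𝓝 x, DifferentiableAt ℝ g (A *ᵥ y + b) :=
    (hasFDerivAt_mulVec_add A b x).continuousAt.eventually
      ((hg.eventually (by simp)).mono fun y hy => hy.differentiableAt (by simp))
  have hpd : pd m (fun y => g (A *ᵥ y + b)) =ᶠ[𝓝 x]
      fun y => ∑ j, A j m * pd j g (A *ᵥ y + b) := by
    filter_upwards [hdiff] with y hy using pd_comp_affine A b hy m
  have hdiff_pd : ∀ j, DifferentiableAt ℝ (pd j g ∘ fun y => A *ᵥ y + b) x := fun j =>
    (hg.differentiableAt_pd j).comp x (hasFDerivAt_mulVec_add A b x).differentiableAt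
  rw [hessian, of_apply, pd_congr n hpd, pd_sum (f := fun j y => A j m * pd j g (A *ᵥ y + b)) _
    fun j _ => (hdiff_pd j).const_mul _]
  simp only [pd_const_mul, pd_comp_affine A b (hg.differentiableAt_pd _)]
  simp only [mul_apply, transpose_apply, hessian, of_apply, Finset.mul_sum, Finset.sum_mul]
  exact Finset.sum_congr rfl fun _ _ => Finset.sum_congr rfl fun _ _ => by ring

lemma hessian_eq_of_comp_affine_eq {B : Matrix (Fin 2) (Fin 2) ℝ} (hB : IsUnit B.det)
    (a : Fin 2 → ℝ) (hg : ContDiffAt ℝ 2 g x) (hG : ∀ᶠ y in 𝓝 x, G (B *ᵥ y + a) = g y) :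
    hessian G (B *ᵥ x + a) = B⁻¹ᵀ * hessian g x * B⁻¹ := by
  have hleft : ∀ y, B⁻¹ *ᵥ (B *ᵥ y + a) + -(B⁻¹ *ᵥ a) = y := fun y => by
    rw [mulVec_add, mulVec_mulVec, nonsing_inv_mul _ hB, one_mulVec, add_neg_cancel_right]
  have hright : ∀ w, B *ᵥ (B⁻¹ *ᵥ w + -(B⁻¹ *ᵥ a)) + a = w := fun w => by
    rw [mulVec_add, mulVec_neg, mulVec_mulVec, mulVec_mulVec, mul_nonsing_inv _ hB, one_mulVec,
      one_mulVec, neg_add_cancel_right]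
  have hGg : G =ᶠ[𝓝 (B *ᵥ x + a)] fun w => g (B⁻¹ *ᵥ w + -(B⁻¹ *ᵥ a)) := by
    have hinv := (hasFDerivAt_mulVec_add B⁻¹ (-(B⁻¹ *ᵥ a)) (B *ᵥ x + a)).continuousAt.tendsto
    rw [hleft] at hinv
    filter_upwards [hinv.eventually hG] with w hw
    rw [← hw, hright]
  rw [hessian_congr hGg, hessian_comp_affine _ _ (by rwa [hleft]), hleft]

end AffineChangeOfVariables

section MatrixAlgebra

lemma Matrix.mul_mul_apply_eq_sum {n R : Type*} [Fintype n] [CommSemiring R]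
    (P A Q : Matrix n n R) (i j : n) :
    (P * A * Q) i j = ∑ k, ∑ l, P i k * Q l j * A k l := by
  simp only [mul_apply, Finset.sum_mul]
  rw [Finset.sum_comm]
  exact Finset.sum_congr rfl fun _ _ => Finset.sum_congr rfl fun _ _ => by ring

lemma frob_eq_trace (A C : Matrix (Fin 2) (Fin 2) ℝ) : frob A C = trace (A * Cᵀ) := by
  simp [frob, trace, mul_apply]

lemma frob_smul_left (c : ℝ) (A C : Matrix (Fin 2) (Fin 2) ℝ) :
    frob (c • A) C = c * frob A C := by
  simp only [frob, Matrix.smul_apply, smul_eq_mul, Finset.mul_sum, mul_assoc]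

lemma frob_mul_mul_transpose_left (B A C : Matrix (Fin 2) (Fin 2) ℝ) :
    frob (B * A * Bᵀ) C = frob A (Bᵀ * C * B) := by
  rw [frob_eq_trace, frob_eq_trace, Matrix.mul_assoc, Matrix.mul_assoc, trace_mul_comm]
  simp [transpose_mul, Matrix.mul_assoc]

end MatrixAlgebra

lemma Fintype.sum_comm_pairs {ι M : Type*} [Fintype ι] [AddCommMonoid M]
    (f : ι → ι → ι → ι → M) :
    ∑ i, ∑ j, ∑ n, ∑ m, f i j n m = ∑ n, ∑ m, ∑ i, ∑ j, f i j n m := by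
  calc _ = ∑ p : ι × ι, ∑ q : ι × ι, f p.1 p.2 q.1 q.2 := by simp only [Fintype.sum_prod_type]
    _ = ∑ q : ι × ι, ∑ p : ι × ι, f p.1 p.2 q.1 q.2 := Finset.sum_comm
    _ = _ := by simp only [Fintype.sum_prod_type]

noncomputable def dualityIntegrand (M : (Fin 2 → ℝ) → Matrix (Fin 2) (Fin 2) ℝ)
    (z : (Fin 2 → ℝ) → ℝ) (x : Fin 2 → ℝ) : ℝ :=
  divDiv M x * z x - frob (M x) (hessian z x)

section Piola

variable {B : Matrix (Fin 2) (Fin 2) ℝ} {M Mhat : (Fin 2 → ℝ) → Matrix (Fin 2) (Fin 2) ℝ}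
  {x : Fin 2 → ℝ}

lemma divDiv_piola (hB : IsUnit B.det) (a : Fin 2 → ℝ) (c : ℝ)
    (hMhat : ∀ k l, ContDiffAt ℝ 2 (fun y => Mhat y k l) x)
    (hM : ∀ᶠ y in 𝓝 x, M (B *ᵥ y + a) = c • (B * Mhat y * Bᵀ)) :
    divDiv M (B *ᵥ x + a) = c * divDiv Mhat x := by
  set φ : Fin 2 → Fin 2 → (Fin 2 → ℝ) → ℝ := fun i j y => (c • (B * Mhat y * Bᵀ)) i j
  have hφ : ∀ i j, ContDiffAt ℝ 2 (φ i j) x := fun i j => by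
    simp only [φ, Matrix.smul_apply, mul_mul_apply_eq_sum, transpose_apply, smul_eq_mul]
    exact contDiffAt_const.mul
      (ContDiffAt.sum fun k _ => ContDiffAt.sum fun l _ => contDiffAt_const.mul (hMhat k l))
  -- Recombining the entries of `M ∘ F` with `B⁻¹ (·) B⁻ᵀ` undoes the Piola transform exactly.
  have hφ_inv : ∀ n m y, ∑ i, ∑ j, B⁻¹ n i * B⁻¹ m j * φ i j y = c * Mhat y n m := by
    intro n m y
    have hcancel : B⁻¹ * (B * Mhat y * Bᵀ) * B⁻¹ᵀ = Mhat y := by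
      rw [transpose_nonsing_inv, ← Matrix.mul_assoc, ← Matrix.mul_assoc, nonsing_inv_mul _ hB,
        Matrix.one_mul, Matrix.mul_assoc, mul_nonsing_inv _ (by rwa [det_transpose]),
        Matrix.mul_one]
    calc ∑ i, ∑ j, B⁻¹ n i * B⁻¹ m j * φ i j y
        = (B⁻¹ * (c • (B * Mhat y * Bᵀ)) * B⁻¹ᵀ) n m := by
          rw [mul_mul_apply_eq_sum]
          rfl
      _ = c * Mhat y n m := by
          rw [Matrix.mul_smul, Matrix.smul_mul, hcancel]
          rfl
  calc divDiv M (B *ᵥ x + a)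
      = ∑ i, ∑ j, (B⁻¹ᵀ * hessian (φ i j) x * B⁻¹) i j := by
        refine Finset.sum_congr rfl fun i _ => Finset.sum_congr rfl fun j _ => ?_
        exact congrFun (congrFun (hessian_eq_of_comp_affine_eq (G := fun y => M y i j) hB a
          (hφ i j) (hM.mono fun y hy => congrFun (congrFun hy i) j)) i) j
    _ = ∑ i, ∑ j, ∑ n, ∑ m, B⁻¹ n i * B⁻¹ m j * hessian (φ i j) x n m := by
        simp [mul_mul_apply_eq_sum]
    _ = ∑ n, ∑ m, ∑ i, ∑ j, B⁻¹ n i * B⁻¹ m j * hessian (φ i j) x n m :=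
        Fintype.sum_comm_pairs _
    _ = ∑ n, ∑ m, hessian (fun y => ∑ i, ∑ j, B⁻¹ n i * B⁻¹ m j * φ i j y) x n m := by
        refine Finset.sum_congr rfl fun n _ => Finset.sum_congr rfl fun m _ => ?_
        rw [hessian_sum _ fun i _ => ContDiffAt.sum fun j _ => contDiffAt_const.mul (hφ i j)]
        simp only [Matrix.sum_apply]
        refine Finset.sum_congr rfl fun i _ => ?_
        rw [hessian_sum _ fun j _ => contDiffAt_const.mul (hφ i j)]
        simp [hessian_const_mul]
    _ = c * divDiv Mhat x := by
        simp only [hφ_inv, hessian_const_mul, divDiv, Finset.mul_sum]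
        rfl

lemma frob_piola (hB : IsUnit B.det) (c : ℝ) (A H : Matrix (Fin 2) (Fin 2) ℝ) :
    frob (c • (B * A * Bᵀ)) (B⁻¹ᵀ * H * B⁻¹) = c * frob A H := by
  have hBD : Bᵀ * B⁻¹ᵀ = 1 := by rw [← transpose_mul, nonsing_inv_mul _ hB, transpose_one]
  rw [frob_smul_left, frob_mul_mul_transpose_left]
  simp only [← Matrix.mul_assoc]
  rw [hBD, Matrix.one_mul, Matrix.mul_assoc _ B⁻¹, nonsing_inv_mul _ hB, Matrix.mul_one]

lemma abs_det_mul_dualityIntegrand_comp_affine (hB : IsUnit B.det) (a : Fin 2 → ℝ)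
    {z zhat : (Fin 2 → ℝ) → ℝ}
    (hMhat : ∀ k l, ContDiffAt ℝ 2 (fun y => Mhat y k l) x) (hzhat : ContDiffAt ℝ 2 zhat x)
    (hM : ∀ᶠ y in 𝓝 x, M (B *ᵥ y + a) = |B.det|⁻¹ • (B * Mhat y * Bᵀ))
    (hz : ∀ᶠ y in 𝓝 x, z (B *ᵥ y + a) = zhat y) :
    |B.det| * dualityIntegrand M z (B *ᵥ x + a) = dualityIntegrand Mhat zhat x := by
  have hdet : |B.det| ≠ 0 := abs_ne_zero.2 hB.ne_zero
  rw [dualityIntegrand, dualityIntegrand, divDiv_piola hB a _ hMhat hM,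
    hessian_eq_of_comp_affine_eq hB a hzhat hz, hz.self_of_nhds, hM.self_of_nhds, frob_piola hB]
  field_simp

end Piola

lemma setIntegral_image_mulVec_add {ι E : Type*} [Fintype ι] [DecidableEq ι]
    [NormedAddCommGroup E] [NormedSpace ℝ E] {B : Matrix ι ι ℝ} (hB : IsUnit B.det)
    (a : ι → ℝ) {s : Set (ι → ℝ)} (hs : MeasurableSet s) (f : (ι → ℝ) → E) :
    ∫ x in (fun y => B *ᵥ y + a) '' s, f x = ∫ y in s, |B.det| • f (B *ᵥ y + a) := by
  have hinj : Function.Injective fun y => B *ᵥ y + a :=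
    (add_left_injective a).comp (mulVec_injective_of_isUnit ((isUnit_iff_isUnit_det B).2 hB))
  rw [integral_image_eq_integral_abs_det_fderiv_smul volume hs
    (fun y _ => (hasFDerivAt_mulVec_add B a y).hasFDerivWithinAt) hinj.injOn]
  simp [ContinuousLinearMap.det, LinearMap.det_toLin']

theorem stmt10_general
    (B : Matrix (Fin 2) (Fin 2) ℝ) (hB : IsUnit B.det) (a : Fin 2 → ℝ)
    (F : (Fin 2 → ℝ) → (Fin 2 → ℝ)) (hF : ∀ xhat, F xhat = B.mulVec xhat + a)
    (Uhat : Set (Fin 2 → ℝ)) (hUhat : IsOpen Uhat)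
    (Mhat M : (Fin 2 → ℝ) → Matrix (Fin 2) (Fin 2) ℝ)
    (hMsmooth : ∀ i j : Fin 2, ContDiffOn ℝ 2 (fun x => Mhat x i j) Uhat)
    (hM : ∀ xhat ∈ Uhat, M (F xhat) = |B.det|⁻¹ • (B * Mhat xhat * B.transpose))
    (zhat z : (Fin 2 → ℝ) → ℝ)
    (hzsmooth : ContDiffOn ℝ 2 zhat Uhat)
    (hz : ∀ xhat ∈ Uhat, z (F xhat) = zhat xhat)
    (That : Set (Fin 2 → ℝ))
    (hThatmeas : MeasurableSet That) (hThatsub : That ⊆ Uhat)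
    (T : Set (Fin 2 → ℝ)) (hT : T = F '' That) :
    ∫ x in T, (divDiv M x * z x - frob (M x) (hessian z x))
      = ∫ xhat in That, (divDiv Mhat xhat * zhat xhat
          - frob (Mhat xhat) (hessian zhat xhat)) := by
  obtain rfl : F = fun y => B *ᵥ y + a := funext hF
  rw [hT, setIntegral_image_mulVec_add hB a hThatmeas]
  refine setIntegral_congr_fun hThatmeas fun x hx => ?_
  have hU : Uhat ∈ 𝓝 x := hUhat.mem_nhds (hThatsub hx)
  exact abs_det_mul_dualityIntegrand_comp_affine hB a (fun k l => (hMsmooth k l).contDiffAt hU)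
    (hzsmooth.contDiffAt hU) (eventually_of_mem hU hM) (eventually_of_mem hU hz)

/-- Invariance of the trace duality `⟨tr M, z⟩_{∂T}`, i.e. of the integral
`∫_T (div Div M) z − M : ∇∇z dx`, under the Piola–Kirchhoff transformation (eq.
(`eq:idboundary`) of Lemma 8, smooth case). Here `Mhat` plays the role of `M̂`, `zhat`
of `ẑ`, `Uhat` of `Û`, `That` of `T̂`, `xhat` of `x̂`. -/
theorem stmt10
    (B : Matrix (Fin 2) (Fin 2) ℝ) (hB : IsUnit B.det) (a : Fin 2 → ℝ)
    (F : (Fin 2 → ℝ) → (Fin 2 → ℝ)) (hF : ∀ xhat, F xhat = B.mulVec xhat + a)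
    (Uhat : Set (Fin 2 → ℝ)) (hUhat : IsOpen Uhat)
    (Mhat M : (Fin 2 → ℝ) → Matrix (Fin 2) (Fin 2) ℝ)
    (hMsmooth : ∀ i j : Fin 2, ContDiffOn ℝ 2 (fun x => Mhat x i j) Uhat)
    (hM : ∀ xhat ∈ Uhat, M (F xhat) = |B.det|⁻¹ • (B * Mhat xhat * B.transpose))
    (zhat z : (Fin 2 → ℝ) → ℝ)
    (hzsmooth : ContDiffOn ℝ 2 zhat Uhat)
    (hz : ∀ xhat ∈ Uhat, z (F xhat) = zhat xhat)
    (That : Set (Fin 2 → ℝ)) (hThatcpt : IsCompact That)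
    (hThatmeas : MeasurableSet That) (hThatsub : That ⊆ Uhat)
    (T : Set (Fin 2 → ℝ)) (hT : T = F '' That) :
    ∫ x in T, (divDiv M x * z x - frob (M x) (hessian z x))
      = ∫ xhat in That, (divDiv Mhat xhat * zhat xhat
          - frob (Mhat xhat) (hessian zhat xhat)) :=
  stmt10_general B hB a F hF Uhat hUhat Mhat M hMsmooth hM zhat z hzsmooth hz That hThatmeas
    hThatsub T hT
end
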